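/- Let n ≥ 3, let σ be a uniformly random permutation of {1,…,n}, and let i be even with 2 ≤ i ≤ n−1. Then E[(σ(i+1) − σ(i)) · 1{interval i is active}] = ((n+1)/8) · i/(i+1). -/

import Mathlib

open Finset

/-- `rnk σ i` is the final (1-based) rank of the `i`-th (1-based) input under the
permutation `σ`; junk value `0` out of range. -/
def rnk {n : ℕ} (σ : Equiv.Perm (Fin n)) (i : ℕ) : ℕ :=
  if h : i - 1 < n then (σ ⟨i - 1, h⟩ : ℕ) + 1 else 0

/-- `relRank σ i` is the relative rank `x_i` of the `i`-th input among the first `i` inputs: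
`x_i = |{j : 1 ≤ j ≤ i ∧ σ(j) ≤ σ(i)}|`. -/
def relRank {n : ℕ} (σ : Equiv.Perm (Fin n)) (i : ℕ) : ℕ :=
  ((Finset.Icc 1 i).filter fun j => rnk σ j ≤ rnk σ i).card

/-- Algorithm OP's active intervals: interval `i` (for `1 ≤ i ≤ n-1`) is active iff
`2 x_i < i + 1`, or `2 x_i = i + 1` and `i ≥ 2` and interval `i-1` is active. -/
def opActive {n : ℕ} (σ : Equiv.Perm (Fin n)) : ℕ → Bool
  | 0 => false
  | i + 1 =>
    (decide (2 * relRank σ (i + 1) < i + 2)) ||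
      ((decide (2 * relRank σ (i + 1) = i + 2)) && (decide (2 ≤ i + 1)) && opActive σ i)

/-- OP's profit `P_OP = Σ_{i=1}^{n-1} (σ(i+1) − σ(i))` over the active intervals `i`. -/
noncomputable def popProfit {n : ℕ} (σ : Equiv.Perm (Fin n)) : ℝ :=
  ∑ i ∈ Finset.Icc 1 (n - 1),
    if opActive σ i then ((rnk σ (i + 1) : ℝ) - rnk σ i) else 0

/-- Expected profit of algorithm OP over a uniformly random permutation of `{1,…,n}`. -/
noncomputable def expPOP (n : ℕ) : ℝ :=
  (∑ σ : Equiv.Perm (Fin n), popProfit σ) / (n.factorial : ℝ)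

/-- Harmonic number `H m = Σ_{j=1}^m 1/j`. -/
noncomputable def harm (m : ℕ) : ℝ := ∑ j ∈ Finset.Icc 1 m, (1 : ℝ) / j

/-- `patternRank σ i j` is the value at `j` of the prefix pattern `pattern_i(σ)`:
`|{j' : 1 ≤ j' ≤ i ∧ σ(j') ≤ σ(j)}|`. -/
def patternRank {n : ℕ} (σ : Equiv.Perm (Fin n)) (i j : ℕ) : ℕ :=
  ((Finset.Icc 1 i).filter fun j' => rnk σ j' ≤ rnk σ j).card

/-- insertion of value v at last position -/
def ins {n : ℕ} (σ : Equiv.Perm (Fin n)) (v : Fin (n+1)) : Equiv.Perm (Fin (n+1)) :=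
  (finSuccEquiv' (Fin.last n)).trans ((Equiv.optionCongr σ).trans (finSuccEquiv' v).symm)

lemma ins_last {n : ℕ} (σ : Equiv.Perm (Fin n)) (v : Fin (n+1)) :
    ins σ v (Fin.last n) = v := by
  simp [ins, finSuccEquiv'_at, finSuccEquiv'_symm_none]

lemma ins_castSucc {n : ℕ} (σ : Equiv.Perm (Fin n)) (v : Fin (n+1)) (q : Fin n) :
    ins σ v (Fin.castSucc q) = v.succAbove (σ q) := by
  have h : (Fin.castSucc q) = (Fin.last n).succAbove q := (Fin.succAbove_last_apply q).symm
  rw [ins]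
  simp only [Equiv.trans_apply, h, finSuccEquiv'_succAbove, Equiv.optionCongr_apply,
    Option.map_some, finSuccEquiv'_symm_some]

lemma ins_bijective {n : ℕ} :
    Function.Bijective (fun p : Equiv.Perm (Fin n) × Fin (n+1) => ins p.1 p.2) := by
  rw [Fintype.bijective_iff_injective_and_card]
  constructor
  · rintro ⟨σ, v⟩ ⟨σ', v'⟩ h
    simp only at h
    have hv : v = v' := by
      have := congrArg (fun e => e (Fin.last n)) h
      simpa [ins_last] using this
    have hσ : σ = σ' := by
      ext q
      have := congrArg (fun e => e (Fin.castSucc q)) h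
      simp only [ins_castSucc, hv] at this
      have := Fin.succAbove_right_injective (p := v') this
      exact congrArg Fin.val this
    exact Prod.ext hσ hv
  · simp [Fintype.card_perm, Nat.factorial_succ, Fintype.card_prod, Nat.mul_comm]

lemma rnk_ins_of_le {n : ℕ} (σ : Equiv.Perm (Fin n)) (v : Fin (n+1)) {j : ℕ}
    (h1 : 1 ≤ j) (h2 : j ≤ n) :
    rnk (ins σ v) j = (v.succAbove (σ ⟨j-1, by omega⟩) : ℕ) + 1 := by
  have hj : j - 1 < n + 1 := by omega
  rw [rnk, dif_pos hj]
  have : (⟨j-1, hj⟩ : Fin (n+1)) = Fin.castSucc ⟨j-1, by omega⟩ := rfl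
  rw [this, ins_castSucc]

lemma rnk_ins_last {n : ℕ} (σ : Equiv.Perm (Fin n)) (v : Fin (n+1)) :
    rnk (ins σ v) (n+1) = (v : ℕ) + 1 := by
  have hj : n + 1 - 1 < n + 1 := by omega
  rw [rnk, dif_pos hj]
  have : (⟨n+1-1, hj⟩ : Fin (n+1)) = Fin.last n := rfl
  rw [this, ins_last]

lemma relRank_ins {n : ℕ} (σ : Equiv.Perm (Fin n)) (v : Fin (n+1)) {j : ℕ} (h2 : j ≤ n) :
    relRank (ins σ v) j = relRank σ j := by
  rcases Nat.eq_zero_or_pos j with hj0 | hj0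
  · subst hj0; simp [relRank]
  unfold relRank
  congr 1
  apply Finset.filter_congr
  intro j' hj'
  simp only [Finset.mem_Icc] at hj'
  have h1 : 1 ≤ j' := hj'.1
  have h2' : j' ≤ n := le_trans hj'.2 h2
  rw [rnk_ins_of_le σ v h1 h2', rnk_ins_of_le σ v hj0 h2]
  have hr : rnk σ j' = (σ ⟨j'-1, by omega⟩ : ℕ) + 1 := by rw [rnk, dif_pos]
  have hr2 : rnk σ j = (σ ⟨j-1, by omega⟩ : ℕ) + 1 := by rw [rnk, dif_pos]
  rw [hr, hr2]
  simp only [add_le_add_iff_right, decide_eq_decide]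
  rw [← Fin.le_def, ← Fin.le_def, Fin.succAbove_le_succAbove_iff]


lemma opActive_ins {n : ℕ} (σ : Equiv.Perm (Fin n)) (v : Fin (n+1)) :
    ∀ i : ℕ, i ≤ n → opActive (ins σ v) i = opActive σ i := by
  intro i
  induction i with
  | zero => intro _; rfl
  | succ k ih =>
    intro hk
    rw [opActive, opActive, relRank_ins σ v (by omega), ih (by omega)]

lemma opActive_even {n : ℕ} (σ : Equiv.Perm (Fin n)) {i : ℕ} (hev : Even i) (h1 : 1 ≤ i) :
    opActive σ i = decide (2 * relRank σ i < i + 1) := by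
  obtain ⟨k, hk⟩ := hev
  rcases i with _ | j
  · omega
  rw [opActive]
  have : ¬ (2 * relRank σ (j+1) = j + 2) := by omega
  simp [this]
  exact Nat.lt_succ_iff


lemma rnk_eq {n : ℕ} (σ : Equiv.Perm (Fin n)) {j : ℕ} (h1 : 1 ≤ j) (h2 : j ≤ n) :
    rnk σ j = (σ ⟨j-1, by omega⟩ : ℕ) + 1 := by
  rw [rnk, dif_pos (by omega)]

lemma rnk_mem {n : ℕ} (σ : Equiv.Perm (Fin n)) {j : ℕ} (h1 : 1 ≤ j) (h2 : j ≤ n) :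
    1 ≤ rnk σ j ∧ rnk σ j ≤ n := by
  rw [rnk_eq σ h1 h2]
  have := (σ ⟨j-1, by omega⟩).isLt
  omega

lemma rnk_inj {n : ℕ} (σ : Equiv.Perm (Fin n)) {j j' : ℕ} (h1 : 1 ≤ j) (h2 : j ≤ n)
    (h1' : 1 ≤ j') (h2' : j' ≤ n) (h : rnk σ j = rnk σ j') : j = j' := by
  rw [rnk_eq σ h1 h2, rnk_eq σ h1' h2'] at h
  have : (σ ⟨j-1, by omega⟩) = (σ ⟨j'-1, by omega⟩) := Fin.ext (by omega)
  have := congrArg Fin.val (σ.injective this)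
  simp only at this
  omega

lemma rnk_surj {n : ℕ} (σ : Equiv.Perm (Fin n)) {w : ℕ} (h1 : 1 ≤ w) (h2 : w ≤ n) :
    ∃ j, 1 ≤ j ∧ j ≤ n ∧ rnk σ j = w := by
  set q : Fin n := σ.symm ⟨w-1, by omega⟩ with hq
  have hqlt := q.isLt
  refine ⟨(q : ℕ) + 1, by omega, by omega, ?_⟩
  rw [rnk_eq σ (by omega) (by omega)]
  have h3 : (⟨(q : ℕ) + 1 - 1, by omega⟩ : Fin n) = q := Fin.ext (by simp)
  rw [h3, hq, Equiv.apply_symm_apply]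
  simp
  omega

/-- full rank lemma: relative rank of the last input among all `M` is its value. -/
lemma relRank_full {M : ℕ} (g : Equiv.Perm (Fin M)) (h1 : 1 ≤ M) :
    relRank g M = rnk g M := by
  unfold relRank
  have hrM := (rnk_mem g h1 (le_refl M)).2
  have hrM1 := (rnk_mem g h1 (le_refl M)).1
  have key : ((Finset.Icc 1 M).filter fun j => rnk g j ≤ rnk g M).card
      = ((Finset.Icc 1 M).filter fun w => w ≤ rnk g M).card := by
    apply Finset.card_bij (fun j _ => rnk g j)
    · intro j hj
      simp only [Finset.mem_filter, Finset.mem_Icc] at hj ⊢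
      exact ⟨⟨(rnk_mem g hj.1.1 hj.1.2).1, (rnk_mem g hj.1.1 hj.1.2).2⟩, hj.2⟩
    · intro j hj j' hj' heq
      simp only [Finset.mem_filter, Finset.mem_Icc] at hj hj'
      exact rnk_inj g hj.1.1 hj.1.2 hj'.1.1 hj'.1.2 heq
    · intro w hw
      simp only [Finset.mem_filter, Finset.mem_Icc] at hw
      obtain ⟨j, hj1, hj2, hj3⟩ := rnk_surj g hw.1.1 hw.1.2
      exact ⟨j, by simp only [Finset.mem_filter, Finset.mem_Icc]; exact ⟨⟨hj1, hj2⟩, by omega⟩, hj3⟩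
  rw [key]
  have : (Finset.Icc 1 M).filter (fun w => w ≤ rnk g M) = Finset.Icc 1 (rnk g M) := by
    ext w
    simp only [Finset.mem_filter, Finset.mem_Icc]
    omega
  rw [this, Nat.card_Icc]
  omega

lemma val_succAbove {N : ℕ} (v : Fin (N+1)) (a : Fin N) :
    ((v.succAbove a : Fin (N+1)) : ℕ) = if (a:ℕ) < (v:ℕ) then (a:ℕ) else (a:ℕ)+1 := by
  rcases lt_or_ge ((a:ℕ)) ((v:ℕ)) with h | h
  · rw [Fin.succAbove_of_castSucc_lt v a (by rwa [Fin.lt_def]), if_pos h, Fin.coe_castSucc]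
  · rw [Fin.succAbove_of_le_castSucc v a (by rwa [Fin.le_def]), if_neg (by omega), Fin.val_succ]

lemma sum_if_le (N aa : ℕ) (haa : aa < N) :
    ∑ w ∈ Finset.range (N+1), (if aa < w then (aa:ℝ) else (aa:ℝ)+1) = (N+1)*(aa:ℝ) + ((aa:ℝ)+1) := by
  have : ∀ w, (if aa < w then (aa:ℝ) else (aa:ℝ)+1) = (aa:ℝ) + (if ¬ aa < w then (1:ℝ) else 0) := by
    intro w; split_ifs <;> simp
  simp only [this]
  rw [Finset.sum_add_distrib, Finset.sum_const, Finset.sum_boole]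
  have : Finset.filter (fun w => ¬ aa < w) (Finset.range (N+1)) = Finset.range (aa+1) := by
    ext w; simp only [Finset.mem_filter, Finset.mem_range]; omega
  rw [this, Finset.card_range, Finset.card_range]
  push_cast
  ring

lemma sum_succAbove (N : ℕ) (a : Fin N) :
    ∑ v : Fin (N+1), ((v.succAbove a : Fin (N+1)) : ℝ) = ((N:ℝ)+1) * (a:ℝ) + ((a:ℝ)+1) := by
  have : ∀ v : Fin (N+1), ((v.succAbove a : Fin (N+1)) : ℝ)
      = (fun w => if (a:ℕ) < w then ((a:ℕ):ℝ) else ((a:ℕ):ℝ)+1) (v : ℕ) := by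
    intro v
    rw [val_succAbove]
    by_cases h : (a:ℕ) < (v:ℕ) <;> simp [h]
  rw [Fintype.sum_congr _ _ this,
    Fin.sum_univ_eq_sum_range (fun w => if (a:ℕ) < w then ((a:ℕ):ℝ) else ((a:ℕ):ℝ)+1) (N+1)]
  rw [sum_if_le N (a:ℕ) a.isLt]

lemma step_lemma (i N : ℕ) (h1 : 1 ≤ i) (hiN : i + 1 ≤ N) :
    (∑ τ : Equiv.Perm (Fin (N+1)), if opActive τ i then ((rnk τ (i+1) : ℝ) - rnk τ i) else 0)
      = ((N : ℝ) + 2) *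
        ∑ σ : Equiv.Perm (Fin N), if opActive σ i then ((rnk σ (i+1) : ℝ) - rnk σ i) else 0 := by
  rw [← Fintype.sum_bijective (fun p : Equiv.Perm (Fin N) × Fin (N+1) => ins p.1 p.2)
    ins_bijective _ _ (fun p => rfl)]
  rw [Fintype.sum_prod_type, Finset.mul_sum]
  apply Finset.sum_congr rfl
  intro σ _
  have hact : ∀ v : Fin (N+1), opActive (ins σ v) i = opActive σ i :=
    fun v => opActive_ins σ v i (by omega)
  have e1 : ∀ v : Fin (N+1), rnk (ins σ v) (i+1) = (v.succAbove (σ ⟨i, by omega⟩) : ℕ) + 1 :=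
    fun v => rnk_ins_of_le σ v (by omega) (by omega)
  have e2 : ∀ v : Fin (N+1), rnk (ins σ v) i = (v.succAbove (σ ⟨i-1, by omega⟩) : ℕ) + 1 :=
    fun v => rnk_ins_of_le σ v (by omega) (by omega)
  simp only [hact, e1, e2]
  by_cases hc : opActive σ i
  · simp only [hc, if_true]
    rw [rnk_eq σ (by omega : 1 ≤ i+1) (by omega : i+1 ≤ N), rnk_eq σ (by omega : 1 ≤ i) (by omega : i ≤ N)]
    push_cast
    rw [Finset.sum_sub_distrib]
    have r1 : ∑ v : Fin (N+1), (((v.succAbove (σ ⟨i, by omega⟩) : Fin (N+1)) : ℝ) + 1)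
        = (((N:ℝ)+1) * ((σ ⟨i, by omega⟩ : Fin N):ℝ) + (((σ ⟨i, by omega⟩ : Fin N):ℝ)+1)) + (N+1) := by
      rw [Finset.sum_add_distrib, sum_succAbove, Finset.sum_const]
      simp
    have r2 : ∑ v : Fin (N+1), (((v.succAbove (σ ⟨i-1, by omega⟩) : Fin (N+1)) : ℝ) + 1)
        = (((N:ℝ)+1) * ((σ ⟨i-1, by omega⟩ : Fin N):ℝ) + (((σ ⟨i-1, by omega⟩ : Fin N):ℝ)+1)) + (N+1) := by
      rw [Finset.sum_add_distrib, sum_succAbove, Finset.sum_const]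
      simp
    rw [r1, r2]
    ring
  · simp [hc]

lemma gauss_sum (M : ℕ) : ∑ w ∈ Finset.range M, (w:ℝ) = (M:ℝ) * ((M:ℝ) - 1) / 2 := by
  induction M with
  | zero => simp
  | succ k ih =>
    rw [Finset.sum_range_succ, ih]
    push_cast
    ring

lemma base_arith (p m : ℕ) (hm : p + 1 = 2 * m) (hp : 1 ≤ p) :
    ∑ u : Fin (p+1), ∑ w : Fin (p+2),
      (if 2 * ((u:ℕ)+1) < p + 2 then ((w:ℕ):ℝ) - ((w.succAbove u : Fin (p+2)) : ℕ) else 0)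
      = (m:ℝ)^2 * ((m:ℝ)+1) := by
  have inner : ∀ u : Fin (p+1),
      ∑ w : Fin (p+2), (((w:ℕ):ℝ) - ((w.succAbove u : Fin (p+2)) : ℕ))
      = ((p:ℝ)+1)*((p:ℝ)+2)/2 - (((p:ℝ)+2) * (u:ℝ) + ((u:ℝ)+1)) := by
    intro u
    rw [Finset.sum_sub_distrib]
    have h2 : ∑ w : Fin (p+2), ((w.succAbove u : Fin (p+2)) : ℝ) = (((p+1:ℕ):ℝ)+1)*(u:ℝ) + ((u:ℝ)+1) :=
      sum_succAbove (p+1) u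
    have h1 : ∑ w : Fin (p+2), ((w:ℕ):ℝ) = ((p:ℝ)+1)*((p:ℝ)+2)/2 := by
      rw [Fin.sum_univ_eq_sum_range (fun w => ((w:ℕ):ℝ)) (p+2), gauss_sum]
      push_cast
      ring
    rw [h1, h2]
    push_cast
    ring
  -- pull the if outside
  have outer : ∀ u : Fin (p+1),
      (∑ w : Fin (p+2), (if 2 * ((u:ℕ)+1) < p + 2 then ((w:ℕ):ℝ) - ((w.succAbove u : Fin (p+2)) : ℕ) else 0))
      = (if (u:ℕ) < m then (((p:ℝ)+1)*((p:ℝ)+2)/2 - (((p:ℝ)+2) * (u:ℝ) + ((u:ℝ)+1))) else 0) := by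
    intro u
    by_cases hc : 2 * ((u:ℕ)+1) < p + 2
    · rw [if_pos (by omega)]
      simp only [hc, if_true]
      exact inner u
    · rw [if_neg (by omega)]
      simp only [hc, if_false]
      exact Finset.sum_const_zero
  rw [Fintype.sum_congr _ _ outer]
  have : ∀ u : Fin (p+1), (if (u:ℕ) < m then (((p:ℝ)+1)*((p:ℝ)+2)/2 - (((p:ℝ)+2) * (u:ℝ) + ((u:ℝ)+1))) else 0)
      = (fun w : ℕ => if w < m then (((p:ℝ)+1)*((p:ℝ)+2)/2 - (((p:ℝ)+2) * (w:ℝ) + ((w:ℝ)+1))) else 0) (u:ℕ) :=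
    fun u => rfl
  rw [Fintype.sum_congr _ _ this,
    Fin.sum_univ_eq_sum_range (fun w : ℕ => if w < m then (((p:ℝ)+1)*((p:ℝ)+2)/2 - (((p:ℝ)+2) * (w:ℝ) + ((w:ℝ)+1))) else 0) (p+1)]
  have hsub : Finset.range m ⊆ Finset.range (p+1) := by
    apply Finset.range_subset_range.2; omega
  rw [← Finset.sum_subset hsub (by intro x _ hx; simp only [Finset.mem_range] at hx; rw [if_neg hx])]
  have : ∀ x ∈ Finset.range m, (if x < m then (((p:ℝ)+1)*((p:ℝ)+2)/2 - (((p:ℝ)+2) * (x:ℝ) + ((x:ℝ)+1))) else 0)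
      = (((p:ℝ)+1)*((p:ℝ)+2)/2 - 1) - (((p:ℝ)+3) * (x:ℝ)) := by
    intro x hx
    rw [if_pos (Finset.mem_range.1 hx)]
    ring
  rw [Finset.sum_congr rfl this, Finset.sum_sub_distrib, Finset.sum_const, ← Finset.mul_sum, gauss_sum]
  have hpm : (p:ℝ) = 2*(m:ℝ) - 1 := by
    have : ((p:ℕ):ℝ) + 1 = 2*(m:ℝ) := by exact_mod_cast congrArg (Nat.cast : ℕ → ℝ) hm
    linarith
  rw [hpm]
  simp only [Finset.card_range, nsmul_eq_mul]
  ring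

lemma base_lemma (p m : ℕ) (hm : p + 1 = 2 * m) (hp : 1 ≤ p) :
    (∑ g : Equiv.Perm (Fin (p+2)),
        if opActive g (p+1) then ((rnk g (p+2) : ℝ) - rnk g (p+1)) else 0)
      = (p.factorial : ℝ) * ((m:ℝ)^2 * ((m:ℝ)+1)) := by
  have heven : Even (p+1) := ⟨m, by omega⟩
  rw [← Fintype.sum_bijective (fun q : Equiv.Perm (Fin (p+1)) × Fin (p+2) => ins q.1 q.2)
    ins_bijective _ _ (fun q => rfl), Fintype.sum_prod_type]
  have key : ∀ (h : Equiv.Perm (Fin (p+1))) (w : Fin (p+2)),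
      (if opActive (ins h w) (p+1) then ((rnk (ins h w) (p+2) : ℝ) - rnk (ins h w) (p+1)) else 0)
      = (if 2 * ((h ⟨p, by omega⟩ : ℕ)+1) < p + 2 then
          ((w:ℕ):ℝ) - ((w.succAbove (h ⟨p, by omega⟩) : Fin (p+2)) : ℕ) else 0) := by
    intro h w
    have ha : opActive (ins h w) (p+1) = decide (2 * relRank (ins h w) (p+1) < p+1+1) :=
      opActive_even _ heven (by omega)
    rw [ha, relRank_ins h w (le_refl (p+1)), relRank_full h (by omega),
      rnk_eq h (by omega) (le_refl (p+1)), rnk_ins_last, rnk_ins_of_le h w (by omega) (le_refl (p+1))]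
    by_cases hc : 2 * ((h ⟨p, by omega⟩ : ℕ)+1) < p + 2
    · rw [if_pos (by simp; omega), if_pos hc]
      push_cast
      ring
    · rw [if_neg (by simp; omega), if_neg hc]
  simp only [key]
  rw [← Fintype.sum_bijective (fun q : Equiv.Perm (Fin p) × Fin (p+1) => ins q.1 q.2)
    ins_bijective _ _ (fun q => rfl), Fintype.sum_prod_type]
  have hlast : ∀ (k : Equiv.Perm (Fin p)) (u : Fin (p+1)), (ins k u) ⟨p, by omega⟩ = u :=
    fun k u => ins_last k u
  simp only [hlast]
  rw [Finset.sum_const]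
  simp only [Finset.card_univ, Fintype.card_perm, Fintype.card_fin, nsmul_eq_mul]
  rw [base_arith p m hm hp]

lemma tsum_formula (p m : ℕ) (hm : p + 1 = 2 * m) (hp : 1 ≤ p) :
    ∀ N, p + 2 ≤ N →
      (∑ σ : Equiv.Perm (Fin N),
          if opActive σ (p+1) then ((rnk σ (p+2) : ℝ) - rnk σ (p+1)) else 0)
        * ((p+3).factorial : ℝ)
      = ((N+1).factorial : ℝ) * ((p.factorial : ℝ) * ((m:ℝ)^2 * ((m:ℝ)+1))) := by
  intro N hN
  induction N, hN using Nat.le_induction with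
  | base =>
    rw [base_lemma p m hm hp]
    ring
  | succ N hN ih =>
    have hstep : (∑ τ : Equiv.Perm (Fin (N+1)),
          if opActive τ (p+1) then ((rnk τ (p+2) : ℝ) - rnk τ (p+1)) else 0)
        = ((N : ℝ) + 2) * ∑ σ : Equiv.Perm (Fin N),
            if opActive σ (p+1) then ((rnk σ (p+2) : ℝ) - rnk σ (p+1)) else 0 :=
      step_lemma (p+1) N (by omega) (by omega)
    have hfac : ((N+1+1).factorial : ℝ) = ((N:ℝ)+2) * ((N+1).factorial : ℝ) := by
      rw [Nat.factorial_succ]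
      push_cast
      ring
    rw [hstep, hfac, mul_assoc, ih, mul_assoc]


/-- For `n ≥ 3`, even `i` with `2 ≤ i ≤ n−1`, and a uniformly random permutation `σ` of
`{1,…,n}`: `E[(σ(i+1) − σ(i)) · 1{interval i is active}] = ((n+1)/8) · i/(i+1)`. -/
theorem stmt8 (n i : ℕ) (hn : 3 ≤ n) (hieven : Even i) (hi1 : 2 ≤ i) (hi2 : i ≤ n - 1) :
    (∑ σ : Equiv.Perm (Fin n),
        if opActive σ i then ((rnk σ (i + 1) : ℝ) - rnk σ i) else 0) / (n.factorial : ℝ)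
      = (((n : ℝ) + 1) / 8) * ((i : ℝ) / ((i : ℝ) + 1)) := by
  obtain ⟨p, rfl⟩ : ∃ p, i = p + 1 := ⟨i - 1, by omega⟩
  obtain ⟨m, hm⟩ : ∃ m, p + 1 = 2 * m := by
    obtain ⟨r, hr⟩ := hieven
    exact ⟨r, by omega⟩
  have hp : 1 ≤ p := by omega
  have hm1 : 1 ≤ m := by omega
  have hform : (∑ σ : Equiv.Perm (Fin n),
        if opActive σ (p+1) then ((rnk σ (p+1+1) : ℝ) - rnk σ (p+1)) else 0)
        * ((p+3).factorial : ℝ)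
      = ((n+1).factorial : ℝ) * ((p.factorial : ℝ) * ((m:ℝ)^2 * ((m:ℝ)+1))) :=
    tsum_formula p m hm hp n (by omega)
  have h2 : ((p+3).factorial : ℝ) ≠ 0 := by
    exact_mod_cast Nat.factorial_ne_zero _
  have h1 : (n.factorial : ℝ) ≠ 0 := by
    exact_mod_cast Nat.factorial_ne_zero _
  have hS : (∑ σ : Equiv.Perm (Fin n),
        if opActive σ (p+1) then ((rnk σ (p+1+1) : ℝ) - rnk σ (p+1)) else 0)
      = ((n+1).factorial : ℝ) * ((p.factorial : ℝ) * ((m:ℝ)^2 * ((m:ℝ)+1)))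
        / ((p+3).factorial : ℝ) := by
    rw [eq_div_iff h2]
    exact hform
  rw [hS]
  have hfact1 : ((n+1).factorial : ℝ) = ((n:ℝ)+1) * (n.factorial : ℝ) := by
    rw [Nat.factorial_succ]
    push_cast
    ring
  have hfact2 : ((p+3).factorial : ℝ)
      = ((p:ℝ)+3)*(((p:ℝ)+2)*(((p:ℝ)+1)*(p.factorial : ℝ))) := by
    rw [show p + 3 = (p+2)+1 from rfl, Nat.factorial_succ,
      show p + 2 = (p+1)+1 from rfl, Nat.factorial_succ, Nat.factorial_succ]
    push_cast
    ring
  have hpm : (p:ℝ) = 2*(m:ℝ) - 1 := by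
    have : ((p:ℕ):ℝ) + 1 = 2*(m:ℝ) := by exact_mod_cast congrArg (Nat.cast : ℕ → ℝ) hm
    linarith
  have hpf : (p.factorial : ℝ) ≠ 0 := by exact_mod_cast Nat.factorial_ne_zero _
  have hmR : (1:ℝ) ≤ (m:ℝ) := by exact_mod_cast hm1
  rw [hfact1, hfact2]
  push_cast
  rw [hpm]
  have k1 : (2*(m:ℝ)-1+3) ≠ 0 := ne_of_gt (by linarith)
  have k2 : (2*(m:ℝ)-1+2) ≠ 0 := ne_of_gt (by linarith)
  have k3 : (2*(m:ℝ)-1+1) ≠ 0 := ne_of_gt (by linarith)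
  have k4 : (2*(m:ℝ)-1+1+1) ≠ 0 := ne_of_gt (by linarith)
  field_simp
  have d1 : ((m:ℝ)*2-1+3)*((m:ℝ)*2-1+2) ≠ 0 := ne_of_gt (by nlinarith)
  have d2 : ((m:ℝ)*2-1+1+1) ≠ 0 := ne_of_gt (by linarith)
  rw [div_eq_div_iff d1 d2]
  ring
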